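/- arXiv:1210.6729 — 3 statements merged into one kernel-verified Lean document; each statement's English description precedes it below -/
import Mathlib

section
/- Fix positive integers t ≤ m ≤ n, let X be an m×n matrix of indeterminates over a field 𝔽 of prime characteristic, R = 𝔽[X], and for 1 ≤ j ≤ m let I_j be the ideal of j×j minors of X. Let s be a positive integer and let δ_1, …, δ_h be minors of X with h ≤ s and with the sum of their sizes equal to ts. Then for every j with 1 ≤ j ≤ t, the product δ_1⋯δ_h lies in the symbolic power I_j^{((t−j+1)s)}. -/
open MvPolynomial

/-- The generic `m × n` matrix `X`, whose entries are the variables `x_{ij}` of the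
polynomial ring `𝔽[X]`. -/
noncomputable def genMat (𝔽 : Type*) [Field 𝔽] (m n : ℕ) :
    Matrix (Fin m) (Fin n) (MvPolynomial (Fin m × Fin n) 𝔽) :=
  Matrix.of fun i j => MvPolynomial.X (i, j)

/-- `f` is a size `s` minor of the generic `m × n` matrix: the determinant of the submatrix
obtained by choosing `s` rows and `s` columns (in increasing order). -/
def IsMinor (𝔽 : Type*) [Field 𝔽] (m n s : ℕ) (f : MvPolynomial (Fin m × Fin n) 𝔽) : Prop :=
  ∃ (row : Fin s → Fin m) (col : Fin s → Fin n), StrictMono row ∧ StrictMono col ∧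
    f = ((genMat 𝔽 m n).submatrix row col).det

/-- `I_s ⊆ 𝔽[X]`, the ideal generated by the size `s` minors of the generic matrix. -/
noncomputable def minorsIdeal (𝔽 : Type*) [Field 𝔽] (m n s : ℕ) :
    Ideal (MvPolynomial (Fin m × Fin n) 𝔽) :=
  Ideal.span {f | IsMinor 𝔽 m n s f}

/-- The `r`-th symbolic power `P^{(r)} = P^r R_P ∩ R` of a prime ideal `P`, described
elementwise: `x ∈ P^{(r)}` iff `s·x ∈ P^r` for some `s ∉ P`. -/
def memSymbolicPower {R : Type*} [CommRing R] (P : Ideal R) (r : ℕ) (x : R) : Prop :=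
  ∃ u : R, u ∉ P ∧ u * x ∈ P ^ r

/-! Let `f` be a minor of size `d ≥ j` and `Δ` its leading minor of size `j - 1`. Sylvester's
determinant identity writes `Δ ^ (d - j) * f` as the determinant of the `(d - j + 1)`-square
matrix of the `j`-minors obtained by bordering `Δ`, so `Δ ^ (d - j) * f ∈ I_j ^ (d - j + 1)`.
The factor `Δ` is harmless: substituting `X = Y Z` with generic matrices `Y`, `Z` of sizes
`m × (j - 1)` and `(j - 1) × n` kills every `j`-minor but no `(j - 1)`-minor, and has a prime
kernel. Multiplying over the `δ_i` gives a `u` outside that kernel with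
`u ∏ δ_i ∈ I_j ^ ∑ (|δ_i| - j + 1)`, and this exponent is at least
`ts - h(j - 1) ≥ (t - j + 1) s` since `h ≤ s`. -/

namespace Matrix

variable {R : Type*} [CommRing R]

theorem det_mem_pow_card {n : Type*} [Fintype n] [DecidableEq n] {J : Ideal R}
    {M : Matrix n n R} (hM : ∀ i j, M i j ∈ J) : M.det ∈ J ^ Fintype.card n := by
  rw [det_apply']
  refine Ideal.sum_mem _ fun σ _ => Ideal.mul_mem_left _ _ ?_
  simpa using Ideal.prod_mem_prod (s := Finset.univ) (I := fun _ => J) fun i _ => hM (σ i) i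

theorem det_mul_eq_zero_of_card_lt {m κ : Type*} [Fintype m] [DecidableEq m] [Fintype κ]
    (P : Matrix m κ R) (Q : Matrix κ m R) (h : Fintype.card κ < Fintype.card m) :
    (P * Q).det = 0 := by
  let e : κ ⊕ Fin (Fintype.card m - Fintype.card κ) ≃ m :=
    Fintype.equivOfCardEq (by simp; omega)
  have hpad :
      P * Q = (fromCols P 0).submatrix id e.symm * (fromRows Q 0).submatrix e.symm id := by
    rw [submatrix_mul_equiv, fromCols_mul_fromRows]
    simp
  rw [hpad, det_mul, det_eq_zero_of_column_eq_zero (e (Sum.inr ⟨0, by omega⟩)) (by simp),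
    zero_mul]

variable {κ ι : Type*} [Fintype κ] [DecidableEq κ]

def borderedMinor (M : Matrix (κ ⊕ ι) (κ ⊕ ι) R) (i i' : ι) : R :=
  (M.submatrix (Sum.elim Sum.inl fun _ : Fin 1 => Sum.inr i)
    (Sum.elim Sum.inl fun _ : Fin 1 => Sum.inr i')).det

theorem borderedMinor_map {S : Type*} [CommRing S] (f : R →+* S)
    (M : Matrix (κ ⊕ ι) (κ ⊕ ι) R) (i i' : ι) :
    borderedMinor (M.map f) i i' = f (borderedMinor M i i') := by
  rw [borderedMinor, borderedMinor, RingHom.map_det]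
  rfl

variable [Fintype ι] [DecidableEq ι]

/-- Sylvester's determinant identity. Each bordered minor is `det A * (D - C A⁻¹ B) i i'`, so the
matrix of bordered minors is `det A` times the Schur complement of `A`. -/
theorem det_borderedMinor_of_isUnit [Nonempty ι] (M : Matrix (κ ⊕ ι) (κ ⊕ ι) R)
    (hA : IsUnit M.toBlocks₁₁.det) :
    (of (borderedMinor M)).det = M.toBlocks₁₁.det ^ (Fintype.card ι - 1) * M.det := by
  obtain ⟨A, B, C, D, rfl⟩ : ∃ A B C D, M = fromBlocks A B C D :=
    ⟨_, _, _, _, (fromBlocks_toBlocks M).symm⟩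
  rw [toBlocks_fromBlocks₁₁] at hA ⊢
  let := A.invertibleOfIsUnitDet hA
  have hschur : of (borderedMinor (fromBlocks A B C D)) = A.det • (D - C * ⅟A * B) := by
    ext i i'
    have hsub : (fromBlocks A B C D).submatrix (Sum.elim Sum.inl fun _ : Fin 1 => Sum.inr i)
        (Sum.elim Sum.inl fun _ : Fin 1 => Sum.inr i') =
        fromBlocks A (of fun a (_ : Fin 1) => B a i') (of fun (_ : Fin 1) b => C i b)
          (of fun _ _ => D i i') := by
      ext (a | a) (b | b) <;> rfl
    rw [of_apply, borderedMinor, hsub, det_fromBlocks₁₁, det_fin_one]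
    simp [sub_apply, mul_apply]
  rw [hschur, det_smul, det_fromBlocks₁₁, ← mul_assoc, ← pow_succ,
    Nat.sub_add_cancel Fintype.card_pos]

theorem det_borderedMinor [IsDomain R] [Nonempty ι] (M : Matrix (κ ⊕ ι) (κ ⊕ ι) R)
    (hA : M.toBlocks₁₁.det ≠ 0) :
    (of (borderedMinor M)).det = M.toBlocks₁₁.det ^ (Fintype.card ι - 1) * M.det := by
  let f := algebraMap R (FractionRing R)
  have hf : Function.Injective f := IsFractionRing.injective R (FractionRing R)
  have hunit : IsUnit (M.map f).toBlocks₁₁.det := by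
    rw [isUnit_iff_ne_zero, show (M.map f).toBlocks₁₁ = f.mapMatrix M.toBlocks₁₁ from rfl,
      ← RingHom.map_det]
    exact (map_ne_zero_iff f hf).2 hA
  have hmap : f.mapMatrix (of (borderedMinor M)) = of (borderedMinor (M.map f)) := by
    ext i i'
    exact (borderedMinor_map f M i i').symm
  apply hf
  rw [RingHom.map_det, map_mul, map_pow, RingHom.map_det, RingHom.map_det, hmap]
  exact det_borderedMinor_of_isUnit (M.map f) hunit

end Matrix

open Matrix

theorem MvPolynomial.det_of_X_ne_zero {σ ι R : Type*} [CommRing R] [Nontrivial R] [Fintype ι]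
    [DecidableEq ι] {v : ι × ι → σ} (hv : Function.Injective v) :
    (of fun i j => (X (v (i, j)) : MvPolynomial σ R)).det ≠ 0 := by
  have hX : (of fun i j => (X (v (i, j)) : MvPolynomial σ R)) =
      (rename v).mapMatrix (mvPolynomialX ι ι R) := by
    ext
    simp
  rw [hX, ← AlgHom.map_det]
  exact (map_ne_zero_iff _ (rename_injective v hv)).2 (det_mvPolynomialX_ne_zero ι R)

section GenericMatrix

variable (𝔽 : Type*) [Field 𝔽] {m n : ℕ}

variable (m n) in
noncomputable def leftFactor (k : ℕ) :
    Matrix (Fin m) (Fin k) (MvPolynomial ((Fin m × Fin k) ⊕ (Fin k × Fin n)) 𝔽) :=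
  of fun i b => X (Sum.inl (i, b))

variable (m n) in
noncomputable def rightFactor (k : ℕ) :
    Matrix (Fin k) (Fin n) (MvPolynomial ((Fin m × Fin k) ⊕ (Fin k × Fin n)) 𝔽) :=
  of fun b j => X (Sum.inr (b, j))

noncomputable def specializeToRank (k : ℕ) :
    MvPolynomial (Fin m × Fin n) 𝔽 →ₐ[𝔽]
      MvPolynomial ((Fin m × Fin k) ⊕ (Fin k × Fin n)) 𝔽 :=
  aeval fun q => (leftFactor 𝔽 m n k * rightFactor 𝔽 m n k) q.1 q.2

theorem specializeToRank_minor (k : ℕ) {a : ℕ} (row : Fin a → Fin m) (col : Fin a → Fin n) :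
    specializeToRank 𝔽 k ((genMat 𝔽 m n).submatrix row col).det =
      ((leftFactor 𝔽 m n k).submatrix row id *
        (rightFactor 𝔽 m n k).submatrix id col).det := by
  rw [AlgHom.map_det, ← submatrix_mul _ _ _ _ _ Function.bijective_id]
  congr 1
  ext b c
  simp [specializeToRank, genMat]

theorem minorsIdeal_le_ker_specializeToRank (k : ℕ) :
    minorsIdeal 𝔽 m n (k + 1) ≤ RingHom.ker (specializeToRank 𝔽 k) := by
  rw [minorsIdeal, Ideal.span_le]
  rintro _ ⟨row, col, -, -, rfl⟩
  exact (specializeToRank_minor 𝔽 k row col).trans (det_mul_eq_zero_of_card_lt _ _ (by simp))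

variable {𝔽} in
theorem minor_notMem_ker_specializeToRank {k : ℕ} {f : MvPolynomial (Fin m × Fin n) 𝔽}
    (hf : IsMinor 𝔽 m n k f) : f ∉ RingHom.ker (specializeToRank 𝔽 k) := by
  obtain ⟨row, col, hrow, hcol, rfl⟩ := hf
  rw [RingHom.mem_ker, specializeToRank_minor, det_mul]
  exact mul_ne_zero
    (det_of_X_ne_zero (v := Sum.inl ∘ Prod.map row id)
      (Sum.inl_injective.comp (hrow.injective.prodMap Function.injective_id)))
    (det_of_X_ne_zero (v := Sum.inr ∘ Prod.map id col)
      (Sum.inr_injective.comp (Function.injective_id.prodMap hcol.injective)))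

def borderIndex (k : ℕ) {e : ℕ} (i : Fin e) (b : Fin (k + 1)) : Fin (k + e) :=
  ⟨if (b : ℕ) < k then b else k + i, by split_ifs <;> omega⟩

theorem borderIndex_strictMono (k : ℕ) {e : ℕ} (i : Fin e) : StrictMono (borderIndex k i) := by
  intro b b' hb
  simp only [borderIndex, Fin.lt_def] at hb ⊢
  split_ifs <;> omega

theorem borderIndex_comp_finSumFinEquiv (k : ℕ) {e : ℕ} (i : Fin e) :
    borderIndex k i ∘ finSumFinEquiv =
      finSumFinEquiv ∘ Sum.elim Sum.inl fun _ : Fin 1 => Sum.inr i := by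
  funext x
  rcases x with a | c <;> ext <;> simp [borderIndex]

theorem leadingMinor_pow_mul_mem_pow {k e : ℕ} {row : Fin (k + e) → Fin m}
    {col : Fin (k + e) → Fin n} (hrow : StrictMono row) (hcol : StrictMono col) :
    ((genMat 𝔽 m n).submatrix (row ∘ Fin.castAdd e) (col ∘ Fin.castAdd e)).det ^ (e - 1) *
      ((genMat 𝔽 m n).submatrix row col).det ∈ minorsIdeal 𝔽 m n (k + 1) ^ e := by
  rcases Nat.eq_zero_or_pos e with rfl | he
  · simp
  have : Nonempty (Fin e) := Fin.pos_iff_nonempty.1 he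
  let M := ((genMat 𝔽 m n).submatrix row col).submatrix finSumFinEquiv finSumFinEquiv
  have hA :
      M.toBlocks₁₁ =
        (genMat 𝔽 m n).submatrix (row ∘ Fin.castAdd e) (col ∘ Fin.castAdd e) := by
    ext
    simp [M, toBlocks₁₁]
  have hA0 : M.toBlocks₁₁.det ≠ 0 := by
    rw [hA]
    exact det_of_X_ne_zero (v := Prod.map (row ∘ Fin.castAdd e) (col ∘ Fin.castAdd e))
      ((hrow.comp (Fin.strictMono_castAdd e)).injective.prodMap
        (hcol.comp (Fin.strictMono_castAdd e)).injective)
  have hbordered (i i' : Fin e) : borderedMinor M i i' ∈ minorsIdeal 𝔽 m n (k + 1) := by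
    refine Ideal.subset_span ⟨row ∘ borderIndex k i, col ∘ borderIndex k i',
      hrow.comp (borderIndex_strictMono k i), hcol.comp (borderIndex_strictMono k i'), ?_⟩
    rw [borderedMinor, ← det_submatrix_equiv_self finSumFinEquiv]
    simp only [M, submatrix_submatrix, Function.comp_assoc, borderIndex_comp_finSumFinEquiv]
  have hsyl := det_mem_pow_card (M := of (borderedMinor M)) hbordered
  rwa [det_borderedMinor M hA0, Fintype.card_fin, hA, det_submatrix_equiv_self] at hsyl

theorem exists_notMem_ker_mul_mem_pow (k : ℕ) {d : ℕ} {f : MvPolynomial (Fin m × Fin n) 𝔽}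
    (hf : IsMinor 𝔽 m n d f) :
    ∃ u ∉ RingHom.ker (specializeToRank 𝔽 k),
      u * f ∈ minorsIdeal 𝔽 m n (k + 1) ^ (d - k) := by
  obtain hd | ⟨e, rfl⟩ : d ≤ k ∨ ∃ e, d = k + e :=
    (le_or_gt d k).imp_right fun hd => ⟨d - k, by omega⟩
  · exact ⟨1, by simp [RingHom.mem_ker], by simp [Nat.sub_eq_zero_of_le hd]⟩
  obtain ⟨row, col, hrow, hcol, rfl⟩ := hf
  set Δ := ((genMat 𝔽 m n).submatrix (row ∘ Fin.castAdd e) (col ∘ Fin.castAdd e)).det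
  have hΔ : IsMinor 𝔽 m n k Δ :=
    ⟨_, _, hrow.comp (Fin.strictMono_castAdd e), hcol.comp (Fin.strictMono_castAdd e), rfl⟩
  refine ⟨Δ ^ (e - 1), fun hu => minor_notMem_ker_specializeToRank hΔ ?_, ?_⟩
  · exact (RingHom.ker_isPrime _).mem_of_pow_mem _ hu
  · simpa using leadingMinor_pow_mul_mem_pow 𝔽 hrow hcol

end GenericMatrix

theorem Ideal.exists_notMem_mul_prod_mem_pow_sum {R ι : Type*} [CommRing R] [Fintype ι]
    {P Q : Ideal R} (hQ : Q.IsPrime) {x : ι → R} {a : ι → ℕ}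
    (h : ∀ i, ∃ u ∉ Q, u * x i ∈ P ^ a i) :
    ∃ u ∉ Q, u * ∏ i, x i ∈ P ^ ∑ i, a i := by
  choose u huQ hu using h
  refine ⟨∏ i, u i, fun hmem => ?_, ?_⟩
  · obtain ⟨i, -, hi⟩ := hQ.prod_mem_iff.1 hmem
    exact huQ i hi
  · rw [← Finset.prod_mul_distrib, ← Finset.prod_pow_eq_pow_sum]
    exact Ideal.prod_mem_prod fun i _ => hu i

theorem prod_minors_mem_symbolicPower_general
    (𝔽 : Type*) [Field 𝔽]
    (m n t : ℕ)
    (s : ℕ) (h : ℕ) (hhs : h ≤ s)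
    (sz : Fin h → ℕ) (δ : Fin h → MvPolynomial (Fin m × Fin n) 𝔽)
    (hminor : ∀ i, IsMinor 𝔽 m n (sz i) (δ i))
    (hdeg : ∑ i, sz i = t * s) :
    ∀ j ∈ Finset.Icc 1 t,
      memSymbolicPower (minorsIdeal 𝔽 m n j) ((t - j + 1) * s) (∏ i, δ i) := by
  intro j hj
  obtain ⟨k, rfl⟩ : ∃ k, j = k + 1 := ⟨j - 1, by grind⟩
  have hkt : k < t := by grind
  obtain ⟨u, hu, hmem⟩ := Ideal.exists_notMem_mul_prod_mem_pow_sum (RingHom.ker_isPrime _)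
    fun i => exists_notMem_ker_mul_mem_pow 𝔽 k (hminor i)
  refine ⟨u, fun huI => hu (minorsIdeal_le_ker_specializeToRank 𝔽 k huI),
    Ideal.pow_le_pow_right ?_ hmem⟩
  have hsum : t * s ≤ ∑ i, (sz i - k) + h * k := calc
    t * s = ∑ i, sz i := hdeg.symm
    _ ≤ ∑ i, (sz i - k + k) := Finset.sum_le_sum fun i _ => le_tsub_add
    _ = ∑ i, (sz i - k) + h * k := by simp [Finset.sum_add_distrib]
  have hsplit : (t - k) * s + k * s = t * s := by rw [← add_mul, Nat.sub_add_cancel hkt.le]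
  have hhk := Nat.mul_le_mul_right k hhs
  rw [show t - (k + 1) + 1 = t - k by omega]
  linarith

/-- If `δ_1, …, δ_h` are minors of the generic `m × n` matrix with `h ≤ s` and total size
`ts`, then for every `1 ≤ j ≤ t` the product `δ_1 ⋯ δ_h` lies in the symbolic power
`I_j^{((t-j+1)s)}`. -/
theorem prod_minors_mem_symbolicPower (p : ℕ) (hp : p.Prime)
    (𝔽 : Type*) [Field 𝔽] [CharP 𝔽 p]
    (m n t : ℕ) (ht : 0 < t) (htm : t ≤ m) (hmn : m ≤ n)
    (s : ℕ) (hs : 0 < s) (h : ℕ) (hhs : h ≤ s)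
    (sz : Fin h → ℕ) (δ : Fin h → MvPolynomial (Fin m × Fin n) 𝔽)
    (hminor : ∀ i, IsMinor 𝔽 m n (sz i) (δ i))
    (hdeg : ∑ i, sz i = t * s) :
    ∀ j ∈ Finset.Icc 1 t,
      memSymbolicPower (minorsIdeal 𝔽 m n j) ((t - j + 1) * s) (∏ i, δ i) :=
  prod_minors_mem_symbolicPower_general 𝔽 m n t s h hhs sz δ hminor hdeg
end

section
/- Fix positive integers t ≤ m ≤ n. There exists a least integer k in the interval [0, t−1] such that (m−k)(n−k)/(t−k) ≤ (m−k−1)(n−k−1)/(t−k−1), where a positive integer divided by zero is interpreted as infinity (so the inequality holds automatically when k = t−1). For this least k, setting u = t(m+n−2k) − mn + k², one has t − k − u ≥ 0. -/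
/-- The condition `(m-k)(n-k)/(t-k) ≤ (m-k-1)(n-k-1)/(t-k-1)`, where a positive integer
divided by zero is interpreted as infinity: for `k = t-1` the right-hand side is infinite
and the condition holds automatically. -/
def minCond (t m n k : ℕ) : Prop :=
  k = t - 1 ∨
    (((m - k) * (n - k) : ℕ) : ℝ) / ((t - k : ℕ) : ℝ) ≤
      (((m - k - 1) * (n - k - 1) : ℕ) : ℝ) / ((t - k - 1 : ℕ) : ℝ)

/-- The integer `u = t(m+n-2k) - mn + k²`. -/
def uInt (t m n k : ℕ) : ℤ :=
  (t : ℤ) * ((m : ℤ) + (n : ℤ) - 2 * (k : ℤ)) - (m : ℤ) * (n : ℤ) + (k : ℤ) ^ 2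

/-! The quantity `t - k - u` is exactly the slack `mn - k² - k - t(m+n-2k-1)` in the cleared form
of `minCond`. So it is nonnegative for every admissible `k`, not only the least one: for
`k < t - 1` this is the inequality itself, and for `k = t - 1` the slack is `(m-t)(n-t) ≥ 0`. -/

theorem sub_sub_uInt_eq (t m n k : ℕ) :
    (t : ℤ) - k - uInt t m n k = m * n - k ^ 2 - k - t * (m + n - 2 * k - 1) := by
  unfold uInt
  ring

theorem minCond_iff {t m n k : ℕ} (hkt : k + 1 < t) (hkm : k < m) (hkn : k < n) :
    minCond t m n k ↔ (t : ℤ) * (m + n - 2 * k - 1) ≤ m * n - k ^ 2 - k := by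
  have hpos : (0 : ℝ) < ((t - k : ℕ) : ℝ) := by exact_mod_cast (by omega : 0 < t - k)
  have hpos' : (0 : ℝ) < ((t - k - 1 : ℕ) : ℝ) := by exact_mod_cast (by omega : 0 < t - k - 1)
  rw [minCond, or_iff_right (by omega), div_le_div_iff₀ hpos hpos', ← Int.cast_le (R := ℝ)]
  push_cast [Nat.cast_sub hkm.le, Nat.cast_sub hkn.le, Nat.cast_sub (by omega : k ≤ t),
    Nat.cast_sub (by omega : 1 ≤ m - k), Nat.cast_sub (by omega : 1 ≤ n - k),
    Nat.cast_sub (by omega : 1 ≤ t - k)]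
  constructor <;> intro h <;> linarith

theorem sub_pred_sub_uInt_nonneg {t m n : ℕ} (htm : t ≤ m) (hmn : m ≤ n) :
    0 ≤ (t : ℤ) - (t - 1 : ℕ) - uInt t m n (t - 1) := by
  rcases t with _ | s
  · simpa [uInt] using mul_nonneg (Int.natCast_nonneg m) (Int.natCast_nonneg n)
  · have hm : (s : ℤ) + 1 ≤ m := by exact_mod_cast htm
    have hn : (s : ℤ) + 1 ≤ n := by exact_mod_cast htm.trans hmn
    simp only [uInt, Nat.add_sub_cancel]
    push_cast
    nlinarith [mul_nonneg (sub_nonneg.mpr hm) (sub_nonneg.mpr hn)]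

theorem sub_sub_uInt_nonneg_of_minCond {t m n k : ℕ} (htm : t ≤ m) (hmn : m ≤ n)
    (hk : k ≤ t - 1) (h : minCond t m n k) : 0 ≤ (t : ℤ) - k - uInt t m n k := by
  rcases hk.eq_or_lt with rfl | hlt
  · exact sub_pred_sub_uInt_nonneg htm hmn
  · rw [sub_sub_uInt_eq, sub_nonneg]
    exact (minCond_iff (by omega) (by omega) (by omega)).mp h

theorem exists_least_k_and_u_nonpos_general (t m n : ℕ) (htm : t ≤ m) (hmn : m ≤ n) :
    ∃ k : ℕ, k ≤ t - 1 ∧ minCond t m n k ∧ (∀ j : ℕ, j < k → ¬ minCond t m n j) ∧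
      0 ≤ (t : ℤ) - (k : ℤ) - uInt t m n k := by
  classical
  have hpred : minCond t m n (t - 1) := Or.inl rfl
  have hex : ∃ k, minCond t m n k := ⟨t - 1, hpred⟩
  have hle : Nat.find hex ≤ t - 1 := Nat.find_min' hex hpred
  exact ⟨Nat.find hex, hle, Nat.find_spec hex, fun j hj => Nat.find_min hex hj,
    sub_sub_uInt_nonneg_of_minCond htm hmn hle (Nat.find_spec hex)⟩

/-- For positive integers `t ≤ m ≤ n` there is a least `k ∈ [0, t-1]` with
`(m-k)(n-k)/(t-k) ≤ (m-k-1)(n-k-1)/(t-k-1)` (division by zero read as infinity), and for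
this `k`, setting `u = t(m+n-2k) - mn + k²`, one has `t - k - u ≥ 0`. -/
theorem exists_least_k_and_u_nonpos (t m n : ℕ) (ht : 0 < t) (htm : t ≤ m) (hmn : m ≤ n) :
    ∃ k : ℕ, k ≤ t - 1 ∧ minCond t m n k ∧ (∀ j : ℕ, j < k → ¬ minCond t m n j) ∧
      0 ≤ (t : ℤ) - (k : ℤ) - uInt t m n k :=
  exists_least_k_and_u_nonpos_general t m n htm hmn
end

section
/- Fix positive integers t ≤ m ≤ n, let X be an m×n matrix of indeterminates over a field 𝔽 of prime characteristic p, R = 𝔽[X] with homogeneous maximal ideal 𝔪, and let I_t be the ideal of t×t minors of X. Let k be an integer with 0 ≤ k ≤ t−1. Then there exists a nonnegative integer N such that for every q = p^e, ν_{I_t}(q) ≤ N + (q−1)(m−k)(n−k)/(t−k). -/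
open MvPolynomial


/-- The bracket power `J^{[q]}`: the ideal generated by the `q`-th powers of the
elements of `J`. -/
noncomputable def bracketPow {R : Type*} [CommRing R] (J : Ideal R) (q : ℕ) : Ideal R :=
  Ideal.span ((fun a => a ^ q) '' (J : Set R))

/-- The homogeneous maximal ideal `𝔪` of a polynomial ring, generated by the variables. -/
noncomputable def maxIdl (𝔽 : Type*) [Field 𝔽] (σ : Type*) : Ideal (MvPolynomial σ 𝔽) :=
  Ideal.span (Set.range MvPolynomial.X)

/-- `ν_I(q) = max { r ∈ ℕ | I^r ⊄ 𝔪^{[q]} }`. -/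
noncomputable def nu {𝔽 σ : Type*} [Field 𝔽] (I : Ideal (MvPolynomial σ 𝔽)) (q : ℕ) : ℕ :=
  sSup {r : ℕ | ¬ I ^ r ≤ bracketPow (maxIdl 𝔽 σ) q}


/-!
Split the generic matrix as `X = [A B; C D]` with `A` its top-left `k × k` block, let `u = det A`,
and let `J` be the ideal of entries of `Y = u • D - C * adj A * B` (the `(k+1)`-minors bordering
`A`). Since `A * adj A = u • 1`,
`u • X = [A; C] * [u • 1, adj A * B] + [0 0; 0 Y]`
is a matrix of rank at most `k` plus one with entries in `J`, so `u ^ t • I_t ⊆ J ^ (t - k)` and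
`u ^ (t r) • I_t ^ r ⊆ J ^ ((t - k) r)`. When `(t - k) r > (m - k)(n - k)(q - 1)`, pigeonhole puts
`J ^ ((t - k) r)` inside `(Y_ij ^ q)`, which is `J.map (expand q)` because Frobenius and
`expand q` agree on the variables, hence on `Y`.

It remains to see that `expand q w * x ∈ J.map (expand q)` forces `x ∈ 𝔪^[q]` when some
specialisation `ψ` kills `J` but not `w` (here `w = u ^ (t r)`, and `ψ` keeps only the first `k`
diagonal variables). The coordinate maps `cartier q α` of `𝔽[X]` over `𝔽[X^q]` are
`𝔽[X^q]`-linear, so `w * cartier q α x ∈ J` and `ψ` kills `cartier q α x`. Its constant term,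
the coefficient of `X ^ α` in `x`, therefore vanishes for every `α < q`.
-/

theorem Ideal.prod_mem_pow_card {R ι : Type*} [CommSemiring R] {J : Ideal R} {s : Finset ι}
    {f : ι → R} (hf : ∀ i ∈ s, f i ∈ J) : ∏ i ∈ s, f i ∈ J ^ s.card := by
  simpa using Ideal.prod_mem_prod (I := fun _ => J) hf

namespace Matrix

variable {R : Type*} [CommRing R]

theorem det_mul_eq_sum_prod_mul_det_submatrix {n ι : Type*} [Fintype n] [DecidableEq n] [Fintype ι]
    (P : Matrix n ι R) (W : Matrix ι n R) :
    (P * W).det = ∑ g : n → ι, (∏ i, P i (g i)) * (W.submatrix g id).det := by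
  have hrows : P * W = of fun i => ∑ a, P i a • W a := by
    ext i j
    simp [mul_apply, Finset.sum_apply]
  rw [hrows]
  change detRowAlternating.toMultilinearMap (fun i => ∑ a, P i a • W a) = _
  rw [detRowAlternating.toMultilinearMap.map_sum (fun i a => P i a • W a)]
  exact Finset.sum_congr rfl fun g _ =>
    detRowAlternating.toMultilinearMap.map_smul_univ (fun i => P i (g i)) (fun i => W (g i))

theorem det_mul_add_mem_pow {n κ : Type*} [Fintype n] [DecidableEq n] [Fintype κ]
    (U : Matrix n κ R) (V : Matrix κ n R) {E : Matrix n n R} {J : Ideal R}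
    (hE : ∀ i j, E i j ∈ J) :
    (U * V + E).det ∈ J ^ (Fintype.card n - Fintype.card κ) := by
  have hsplit : U * V + E = fromCols U E * fromRows V (1 : Matrix n n R) := by
    rw [fromCols_mul_fromRows, Matrix.mul_one]
  rw [hsplit, det_mul_eq_sum_prod_mul_det_submatrix]
  refine Ideal.sum_mem _ fun g _ => ?_
  by_cases hg : Function.Injective g
  -- an injective `g` picks at most `card κ` columns of `U`, and the other factors lie in `J`
  · set s := Finset.univ.filter fun i => (g i).isRight
    have hcard : Fintype.card n - Fintype.card κ ≤ s.card := by
      have hleft : sᶜ.card ≤ Fintype.card κ := by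
        simpa using Finset.card_le_card_of_injOn g (t := Finset.univ.map .inl)
          (fun i hi => by
            obtain ⟨a, ha⟩ := Sum.isLeft_iff.mp (by simpa [s] using hi)
            simp [ha]) hg.injOn
      rw [Finset.card_compl] at hleft
      omega
    have hmem : ∀ i ∈ s, fromCols U E i (g i) ∈ J := by
      intro i hi
      obtain ⟨j, hj⟩ := Sum.isRight_iff.mp (Finset.mem_filter.mp hi).2
      simp [hj, hE]
    rw [← Finset.prod_mul_prod_compl s]
    exact Ideal.mul_mem_right _ _ (Ideal.mul_mem_right _ _
      (Ideal.pow_le_pow_right hcard (Ideal.prod_mem_pow_card hmem)))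
  · obtain ⟨i, j, hij, hne⟩ := Function.not_injective_iff.mp hg
    rw [det_zero_of_row_eq hne (funext fun j => by simp [hij]), mul_zero]
    exact zero_mem _

variable {κ ι ι' : Type*} [Fintype κ] [DecidableEq κ]

def entriesIdeal {m n : Type*} (A : Matrix m n R) : Ideal R :=
  Ideal.span (Set.range fun ij : m × n => A ij.1 ij.2)

/-- `det A` times the Schur complement `D - C * A⁻¹ * B` of the block `A = M.toBlocks₁₁`. -/
def schurAdj (M : Matrix (κ ⊕ ι) (κ ⊕ ι') R) : Matrix ι ι' R :=
  M.toBlocks₁₁.det • M.toBlocks₂₂ - M.toBlocks₂₁ * M.toBlocks₁₁.adjugate * M.toBlocks₁₂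

theorem schurAdj_map {S F : Type*} [CommRing S] [FunLike F R S] [RingHomClass F R S] (f : F)
    (M : Matrix (κ ⊕ ι) (κ ⊕ ι') R) : (schurAdj M).map f = schurAdj (M.map f) := by
  set g : R →+* S := ↑f
  change (schurAdj M).map g = schurAdj (M.map g)
  have hA : (M.map g).toBlocks₁₁ = g.mapMatrix M.toBlocks₁₁ := rfl
  rw [schurAdj, schurAdj, Matrix.map_sub _ (map_sub g), Matrix.map_mul, Matrix.map_mul, hA,
    ← g.map_det, ← g.map_adjugate]
  congr 1
  ext i j
  simp [toBlocks₂₂]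

theorem map_entriesIdeal {S F : Type*} [CommRing S] [FunLike F R S] [RingHomClass F R S] (f : F)
    {m n : Type*} (A : Matrix m n R) : (entriesIdeal A).map f = entriesIdeal (A.map f) := by
  rw [entriesIdeal, Ideal.map_span, ← Set.range_comp]
  rfl

theorem det_toBlocks₁₁_smul_eq (M : Matrix (κ ⊕ ι) (κ ⊕ ι') R) :
    M.toBlocks₁₁.det • M = fromRows M.toBlocks₁₁ M.toBlocks₂₁ *
      fromCols (M.toBlocks₁₁.det • (1 : Matrix κ κ R)) (M.toBlocks₁₁.adjugate * M.toBlocks₁₂) +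
      fromBlocks 0 0 0 (schurAdj M) := by
  rw [fromRows_mul_fromCols, fromBlocks_add, ← Matrix.mul_assoc, mul_adjugate]
  conv_lhs => rw [← fromBlocks_toBlocks M]
  simp [schurAdj, fromBlocks_smul, Matrix.mul_assoc]

theorem det_toBlocks₁₁_pow_mul_det_submatrix_mem {n : Type*} [Fintype n] [DecidableEq n]
    (M : Matrix (κ ⊕ ι) (κ ⊕ ι') R) (r : n → κ ⊕ ι) (c : n → κ ⊕ ι') :
    M.toBlocks₁₁.det ^ Fintype.card n * (M.submatrix r c).det ∈
      entriesIdeal (schurAdj M) ^ (Fintype.card n - Fintype.card κ) := by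
  have hsub : M.toBlocks₁₁.det • M.submatrix r c = (M.toBlocks₁₁.det • M).submatrix r c := rfl
  have hadd (A B : Matrix (κ ⊕ ι) (κ ⊕ ι') R) :
      (A + B).submatrix r c = A.submatrix r c + B.submatrix r c := rfl
  rw [← det_smul, hsub, det_toBlocks₁₁_smul_eq, hadd,
    submatrix_mul _ _ _ id _ Function.bijective_id]
  refine det_mul_add_mem_pow _ _ fun i j => ?_
  rw [submatrix_apply]
  rcases r i with a | a <;> rcases c j with b | b
  case inr.inr => exact Ideal.subset_span ⟨(a, b), rfl⟩
  all_goals exact zero_mem _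

end Matrix

namespace MvPolynomial

variable {R σ : Type*} [CommSemiring R]

theorem monomial_mem_span_X_pow {d : σ →₀ ℕ} {i : σ} {q : ℕ} (h : q ≤ d i) (c : R) :
    monomial d c ∈ Ideal.span (Set.range fun i => (X i : MvPolynomial σ R) ^ q) := by
  have hd : d = Finsupp.single i q + (d - Finsupp.single i q) := by
    rw [add_tsub_cancel_of_le (Finsupp.single_le_iff.mpr h)]
  rw [hd, ← one_mul c, ← monomial_mul, ← X_pow_eq_monomial]
  exact Ideal.mul_mem_right _ _ (Ideal.subset_span ⟨i, rfl⟩)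

theorem mem_span_X_pow_of_forall_mem_support {P : MvPolynomial σ R} {q : ℕ}
    (h : ∀ d ∈ P.support, ∃ i, q ≤ d i) :
    P ∈ Ideal.span (Set.range fun i => (X i : MvPolynomial σ R) ^ q) := by
  rw [P.as_sum]
  refine Ideal.sum_mem _ fun d hd => ?_
  obtain ⟨i, hi⟩ := h d hd
  exact monomial_mem_span_X_pow hi _

/-- Pigeonhole: a monomial of degree `s > card ι * (q - 1)` in the `y i` has some `y i ^ q` as
a factor. -/
theorem _root_.Ideal.span_range_pow_le_span_range_pow {R ι : Type*} [CommSemiring R] [Fintype ι]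
    (y : ι → R) {q s : ℕ} (hs : Fintype.card ι * (q - 1) < s) :
    Ideal.span (Set.range y) ^ s ≤ Ideal.span (Set.range fun i => y i ^ q) := by
  intro z hz
  obtain ⟨P, hP, rfl⟩ := (Ideal.mem_span_pow_iff_exists_isHomogeneous y z).mp hz
  have hPX : P ∈ Ideal.span (Set.range fun i => (X i : MvPolynomial ι R) ^ q) := by
    refine mem_span_X_pow_of_forall_mem_support fun d hd => ?_
    by_contra! hlt
    have hdeg : d.degree = s := by
      rw [Finsupp.degree_eq_weight_one]
      exact hP (mem_support_iff.mp hd)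
    have hsum : ∑ i, d i ≤ ∑ _i : ι, (q - 1) :=
      Finset.sum_le_sum fun i _ => Nat.le_sub_one_of_lt (hlt i)
    rw [← Finsupp.degree_eq_sum, hdeg, Finset.sum_const, Finset.card_univ, smul_eq_mul] at hsum
    omega
  have := Ideal.mem_map_of_mem (MvPolynomial.eval y) hPX
  simpa [Ideal.map_span, ← Set.range_comp, Function.comp_def] using this

theorem mem_bracketPow_maxIdl_of_coeff_eq_zero {𝔽 σ : Type*} [Field 𝔽] {q : ℕ}
    {x : MvPolynomial σ 𝔽} (h : ∀ α : σ →₀ ℕ, (∀ v, α v < q) → x.coeff α = 0) :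
    x ∈ bracketPow (maxIdl 𝔽 σ) q := by
  refine (Ideal.span_le.mpr ?_) (mem_span_X_pow_of_forall_mem_support (q := q) fun α hα => ?_)
  · rintro _ ⟨v, rfl⟩
    exact Ideal.subset_span ⟨X v, Ideal.subset_span ⟨v, rfl⟩, rfl⟩
  · by_contra! hlt
    exact mem_support_iff.mp hα (h α hlt)

section Cartier

variable {R σ : Type*} [CommSemiring R] [DecidableEq σ]

/-- `MvPolynomial σ R` is free over its subring of `q`-th powers `expand q`, with basis the
monomials `X^α` with all `α v < q`; `cartier q α` is the coordinate along `X^α`. -/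
noncomputable def cartier (q : ℕ) (α : σ →₀ ℕ) : MvPolynomial σ R →ₗ[R] MvPolynomial σ R :=
  (basisMonomials σ R).constr R fun γ =>
    if γ.mapRange (· % q) (Nat.zero_mod q) = α then
      monomial (γ.mapRange (· / q) (Nat.zero_div q)) 1
    else 0

variable {q : ℕ} {α : σ →₀ ℕ}

theorem cartier_monomial (γ : σ →₀ ℕ) (c : R) :
    cartier q α (monomial γ c) =
      if γ.mapRange (· % q) (Nat.zero_mod q) = α then
        monomial (γ.mapRange (· / q) (Nat.zero_div q)) c
      else 0 := by
  have hγ : (monomial γ c : MvPolynomial σ R) = c • basisMonomials σ R γ := by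
    rw [coe_basisMonomials, smul_monomial, smul_eq_mul, mul_one]
  rw [hγ, map_smul, cartier, Module.Basis.constr_basis]
  split_ifs <;> simp [smul_monomial]

theorem cartier_expand_mul (hq : 0 < q) (g x : MvPolynomial σ R) :
    cartier q α (expand q g * x) = g * cartier q α x := by
  induction g using MvPolynomial.induction_on' with
  | add g₁ g₂ ih₁ ih₂ => rw [map_add, add_mul, map_add, ih₁, ih₂, add_mul]
  | monomial β b =>
    induction x using MvPolynomial.induction_on' with
    | add x₁ x₂ ih₁ ih₂ => rw [mul_add, map_add, ih₁, ih₂, map_add, mul_add]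
    | monomial γ c =>
      have hmod : (q • β + γ).mapRange (· % q) (Nat.zero_mod q) =
          γ.mapRange (· % q) (Nat.zero_mod q) := by
        ext v; simp
      have hdiv : (q • β + γ).mapRange (· / q) (Nat.zero_div q) =
          β + γ.mapRange (· / q) (Nat.zero_div q) := by
        ext v; simp [Nat.mul_add_div hq]
      rw [expand_monomial, monomial_mul, cartier_monomial, cartier_monomial, hmod, hdiv]
      split_ifs <;> simp [monomial_mul]

theorem constantCoeff_cartier (hα : ∀ v, α v < q) (x : MvPolynomial σ R) :
    constantCoeff (cartier q α x) = x.coeff α := by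
  induction x using MvPolynomial.induction_on' with
  | add x₁ x₂ ih₁ ih₂ => rw [map_add, map_add, ih₁, ih₂, coeff_add]
  | monomial γ c =>
    have hγ : (γ.mapRange (· % q) (Nat.zero_mod q) = α ∧
        γ.mapRange (· / q) (Nat.zero_div q) = 0) ↔ γ = α := by
      constructor
      · rintro ⟨hmod, hdiv⟩
        ext v
        have hmodv := DFunLike.congr_fun hmod v
        have hdivv := DFunLike.congr_fun hdiv v
        simp only [Finsupp.mapRange_apply, Finsupp.coe_zero, Pi.zero_apply] at hmodv hdivv
        rw [← Nat.div_add_mod (γ v) q, hmodv, hdivv, mul_zero, zero_add]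
      · rintro rfl
        constructor <;> ext v <;> simp [Nat.mod_eq_of_lt (hα v), Nat.div_eq_of_lt (hα v)]
    simp only [cartier_monomial, coeff_monomial, ← hγ]
    split_ifs <;> simp_all [constantCoeff_monomial]

theorem cartier_mem_of_mem_map_expand (hq : 0 < q) {J : Ideal (MvPolynomial σ R)}
    {x : MvPolynomial σ R} (hx : x ∈ J.map (expand q)) : cartier q α x ∈ J := by
  -- strengthened so that the induction over `J.map (expand q)` absorbs arbitrary multipliers
  suffices ∀ c, cartier q α (c * x) ∈ J by simpa using this 1
  refine Submodule.span_induction ?_ ?_ ?_ ?_ hx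
  · rintro _ ⟨j, hj, rfl⟩ c
    rw [mul_comm, cartier_expand_mul hq]
    exact J.mul_mem_right _ hj
  · simp
  · intro y z _ _ hy hz c
    rw [mul_add, map_add]
    exact J.add_mem (hy c) (hz c)
  · intro a y _ hy c
    rw [smul_eq_mul, ← mul_assoc]
    exact hy _

end Cartier

theorem coeff_zero_apply_eq_constantCoeff {R σ : Type*} [CommSemiring R]
    (ψ : MvPolynomial σ R →ₐ[R] Polynomial R) (hψ : ∀ v, (ψ (X v)).coeff 0 = 0)
    (f : MvPolynomial σ R) : (ψ f).coeff 0 = constantCoeff f := by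
  change (Polynomial.constantCoeff.comp ψ.toRingHom) f = constantCoeff f
  congr 1
  refine MvPolynomial.ringHom_ext (fun a => ?_) fun v => ?_
  · simp
  · simpa using hψ v

theorem mem_bracketPow_of_expand_mul_mem {𝔽 σ : Type*} [Field 𝔽] [DecidableEq σ] {q : ℕ}
    (hq : 0 < q) {J : Ideal (MvPolynomial σ 𝔽)} {w x : MvPolynomial σ 𝔽}
    (ψ : MvPolynomial σ 𝔽 →ₐ[𝔽] Polynomial 𝔽) (hψX : ∀ v, (ψ (X v)).coeff 0 = 0)
    (hψJ : J ≤ RingHom.ker ψ) (hψw : ψ w ≠ 0) (h : expand q w * x ∈ J.map (expand q)) :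
    x ∈ bracketPow (maxIdl 𝔽 σ) q := by
  refine mem_bracketPow_maxIdl_of_coeff_eq_zero fun α hα => ?_
  have hJ : w * cartier q α x ∈ J := cartier_expand_mul hq w x ▸ cartier_mem_of_mem_map_expand hq h
  have hψ : ψ (cartier q α x) = 0 := by
    simpa [hψw] using hψJ hJ
  rw [← constantCoeff_cartier hα,
    ← coeff_zero_apply_eq_constantCoeff ψ hψX, hψ, Polynomial.coeff_zero]

section Frobenius

variable {R σ ι ι' κ : Type*} [CommRing R] (p : ℕ) [ExpChar R p] (e : ℕ)

theorem map_iterateFrobenius_eq_map_expand {M : Matrix ι ι' (MvPolynomial σ R)}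
    (hM : ∀ i j, ∃ v, M i j = X v) :
    M.map (iterateFrobenius _ p e) = M.map (expand (p ^ e)) := by
  ext i j
  obtain ⟨v, hv⟩ := hM i j
  simp [hv, iterateFrobenius_def]

variable [Fintype κ] [DecidableEq κ] {M : Matrix (κ ⊕ ι) (κ ⊕ ι') (MvPolynomial σ R)}

theorem expand_det_toBlocks₁₁ (hM : ∀ i j, ∃ v, M i j = X v) :
    expand (p ^ e) M.toBlocks₁₁.det = M.toBlocks₁₁.det ^ p ^ e := by
  have hA : M.toBlocks₁₁.map (iterateFrobenius _ p e) = M.toBlocks₁₁.map (expand (p ^ e)) :=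
    congrArg Matrix.toBlocks₁₁ (map_iterateFrobenius_eq_map_expand p e hM)
  rw [← iterateFrobenius_def, RingHom.map_det, AlgHom.map_det]
  exact congrArg Matrix.det hA.symm

theorem map_expand_entriesIdeal_schurAdj (hM : ∀ i j, ∃ v, M i j = X v) :
    (Matrix.entriesIdeal (Matrix.schurAdj M)).map (expand (p ^ e)) =
      Ideal.span (Set.range fun ij : ι × ι' => Matrix.schurAdj M ij.1 ij.2 ^ p ^ e) := by
  rw [Matrix.map_entriesIdeal, Matrix.schurAdj_map, ← map_iterateFrobenius_eq_map_expand p e hM,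
    ← Matrix.schurAdj_map, Matrix.entriesIdeal]
  simp [iterateFrobenius_def]

end Frobenius

end MvPolynomial

section GenericMatrix

open Matrix

variable (𝔽 : Type*) [Field 𝔽] {m n k : ℕ}

def finSumFinSubEquiv (hk : k ≤ m) : Fin k ⊕ Fin (m - k) ≃ Fin m :=
  finSumFinEquiv.trans (finCongr (Nat.add_sub_cancel' hk))

noncomputable def genMatBlocks (hkm : k ≤ m) (hkn : k ≤ n) :
    Matrix (Fin k ⊕ Fin (m - k)) (Fin k ⊕ Fin (n - k)) (MvPolynomial (Fin m × Fin n) 𝔽) :=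
  (genMat 𝔽 m n).submatrix (finSumFinSubEquiv hkm) (finSumFinSubEquiv hkn)

theorem exists_genMatBlocks_eq_X (hkm : k ≤ m) (hkn : k ≤ n) (i : Fin k ⊕ Fin (m - k))
    (j : Fin k ⊕ Fin (n - k)) :
    ∃ v, genMatBlocks 𝔽 hkm hkn i j = X v :=
  ⟨_, rfl⟩

theorem span_singleton_mul_minorsIdeal_le (hkm : k ≤ m) (hkn : k ≤ n) (t : ℕ) :
    Ideal.span {(genMatBlocks 𝔽 hkm hkn).toBlocks₁₁.det ^ t} * minorsIdeal 𝔽 m n t ≤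
      entriesIdeal (schurAdj (genMatBlocks 𝔽 hkm hkn)) ^ (t - k) := by
  rw [minorsIdeal, Ideal.span_mul_span', Ideal.span_le]
  rintro _ ⟨_, rfl, _, ⟨row, col, -, -, rfl⟩, rfl⟩
  have hsub : (genMat 𝔽 m n).submatrix row col = (genMatBlocks 𝔽 hkm hkn).submatrix
      ((finSumFinSubEquiv hkm).symm ∘ row) ((finSumFinSubEquiv hkn).symm ∘ col) := by
    ext i j
    simp [genMatBlocks]
  rw [hsub]
  simpa using det_toBlocks₁₁_pow_mul_det_submatrix_mem (genMatBlocks 𝔽 hkm hkn)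
    ((finSumFinSubEquiv hkm).symm ∘ row) ((finSumFinSubEquiv hkn).symm ∘ col)

noncomputable def diagSpecialization (k : ℕ) :
    MvPolynomial (Fin m × Fin n) 𝔽 →ₐ[𝔽] Polynomial 𝔽 :=
  aeval fun v => if (v.1 : ℕ) = v.2 ∧ (v.2 : ℕ) < k then Polynomial.X else 0

theorem coeff_zero_diagSpecialization_X (v : Fin m × Fin n) :
    (diagSpecialization 𝔽 k (X v)).coeff 0 = 0 := by
  simp only [diagSpecialization, aeval_X]
  split_ifs <;> simp

theorem diagSpecialization_det_toBlocks₁₁ (hkm : k ≤ m) (hkn : k ≤ n) :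
    diagSpecialization 𝔽 k (genMatBlocks 𝔽 hkm hkn).toBlocks₁₁.det = Polynomial.X ^ k := by
  rw [AlgHom.map_det]
  have : (diagSpecialization 𝔽 k).mapMatrix (genMatBlocks 𝔽 hkm hkn).toBlocks₁₁ =
      (Polynomial.X : Polynomial 𝔽) • (1 : Matrix (Fin k) (Fin k) (Polynomial 𝔽)) := by
    refine Matrix.ext fun i j => ?_
    simp [diagSpecialization, genMatBlocks, genMat, finSumFinSubEquiv, toBlocks₁₁, one_apply,
      Fin.val_eq_val]
  rw [this, det_smul, det_one, mul_one, Fintype.card_fin]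

theorem entriesIdeal_schurAdj_le_ker (hkm : k ≤ m) (hkn : k ≤ n) :
    entriesIdeal (schurAdj (genMatBlocks 𝔽 hkm hkn)) ≤
      RingHom.ker (diagSpecialization 𝔽 k (m := m) (n := n)) := by
  rw [entriesIdeal, Ideal.span_le]
  rintro _ ⟨⟨i, j⟩, rfl⟩
  have hB : ((genMatBlocks 𝔽 hkm hkn).map (diagSpecialization 𝔽 k)).toBlocks₁₂ = 0 := by
    refine Matrix.ext fun a b => ?_
    simp [diagSpecialization, genMatBlocks, genMat, finSumFinSubEquiv, toBlocks₁₂]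
  have hD : ((genMatBlocks 𝔽 hkm hkn).map (diagSpecialization 𝔽 k)).toBlocks₂₂ = 0 := by
    refine Matrix.ext fun a b => ?_
    simp [diagSpecialization, genMatBlocks, genMat, finSumFinSubEquiv, toBlocks₂₂]
  have := congrFun (congrFun (schurAdj_map (diagSpecialization 𝔽 k) (genMatBlocks 𝔽 hkm hkn)) i) j
  simpa [schurAdj, hB, hD] using this

theorem minorsIdeal_pow_le_bracketPow (hkm : k ≤ m) (hkn : k ≤ n) (p : ℕ) [ExpChar 𝔽 p]
    {t e r : ℕ} (hr : (m - k) * (n - k) * (p ^ e - 1) < (t - k) * r) :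
    minorsIdeal 𝔽 m n t ^ r ≤ bracketPow (maxIdl 𝔽 (Fin m × Fin n)) (p ^ e) := by
  set M := genMatBlocks 𝔽 hkm hkn
  set u := M.toBlocks₁₁.det
  set J := entriesIdeal (schurAdj M)
  intro x hx
  have hux : u ^ (t * r) * x ∈ J ^ ((t - k) * r) := by
    have hpow := Ideal.pow_right_mono (span_singleton_mul_minorsIdeal_le 𝔽 hkm hkn t) r
    rw [mul_pow, Ideal.span_singleton_pow, ← pow_mul, ← pow_mul] at hpow
    exact hpow (Ideal.mul_mem_mul (Ideal.mem_span_singleton_self _) hx)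
  have hJ : J ^ ((t - k) * r) ≤ J.map (expand (p ^ e)) := by
    rw [map_expand_entriesIdeal_schurAdj p e (exists_genMatBlocks_eq_X 𝔽 hkm hkn)]
    exact Ideal.span_range_pow_le_span_range_pow _ (by simpa using hr)
  have hexpand : expand (p ^ e) (u ^ (t * r)) = u ^ ((p ^ e - 1) * (t * r)) * u ^ (t * r) := by
    rw [map_pow, expand_det_toBlocks₁₁ p e (exists_genMatBlocks_eq_X 𝔽 hkm hkn), ← pow_mul,
      ← pow_add, ← add_one_mul, Nat.sub_one_add_one (expChar_pow_pos 𝔽 p e).ne']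
  refine mem_bracketPow_of_expand_mul_mem (expChar_pow_pos 𝔽 p e) (diagSpecialization 𝔽 k)
    (coeff_zero_diagSpecialization_X 𝔽) (entriesIdeal_schurAdj_le_ker 𝔽 hkm hkn)
    (w := u ^ (t * r)) ?_ ?_
  · rw [map_pow, diagSpecialization_det_toBlocks₁₁]
    exact pow_ne_zero _ (pow_ne_zero _ Polynomial.X_ne_zero)
  · rw [hexpand, mul_assoc]
    exact Ideal.mul_mem_left _ _ (hJ hux)

theorem nu_minorsIdeal_le (hkm : k ≤ m) (hkn : k ≤ n) (p : ℕ) [ExpChar 𝔽 p] {t : ℕ}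
    (hkt : k < t) (e : ℕ) :
    nu (minorsIdeal 𝔽 m n t) (p ^ e) ≤ (p ^ e - 1) * ((m - k) * (n - k)) / (t - k) := by
  refine csSup_le' fun r hr => ?_
  by_contra! hlt
  refine hr (minorsIdeal_pow_le_bracketPow 𝔽 hkm hkn p ?_)
  have := (Nat.div_lt_iff_lt_mul (Nat.sub_pos_of_lt hkt)).mp hlt
  linarith [mul_comm (m - k) (n - k)]

end GenericMatrix

/-- For `0 ≤ k ≤ t-1` there is an `N ∈ ℕ` such that for every `q = p^e`,
`ν_{I_t}(q) ≤ N + (q-1)(m-k)(n-k)/(t-k)`. -/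
theorem nu_le_bound (p : ℕ) (hp : p.Prime) (𝔽 : Type*) [Field 𝔽] [CharP 𝔽 p]
    (m n t : ℕ) (ht : 0 < t) (htm : t ≤ m) (hmn : m ≤ n)
    (k : ℕ) (hk : k ≤ t - 1) :
    ∃ N : ℕ, ∀ e : ℕ, 1 ≤ e →
      (nu (minorsIdeal 𝔽 m n t) (p ^ e) : ℝ) ≤
        (N : ℝ) + (((p ^ e - 1) * ((m - k) * (n - k)) : ℕ) : ℝ) / ((t - k : ℕ) : ℝ) := by
  have : ExpChar 𝔽 p := ExpChar.prime hp
  refine ⟨0, fun e _ => ?_⟩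
  rw [Nat.cast_zero, zero_add]
  exact (Nat.cast_le.mpr (nu_minorsIdeal_le 𝔽 (by omega) (by omega) p (by omega) e)).trans
    Nat.cast_div_le
end
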